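/- arXiv:2507.19761 — 4 statements merged into one kernel-verified Lean document; each statement's English description precedes it below -/
import Mathlib

section
/- Let H4 be the Sweedler Hopf algebra over R with basis 1, g, v, gv, and define the linear map ·: H4 ⊗ H_ss → H_ss (depending on real parameters k1,k2,k3,k4,l1,l2,l3,l4) by: 1·x = x for all x; g·x = 0 for all basis x; v·1 = k1 + k2 e1 + k3 e2 - k4 e3, v·e1 = k2 + k1 e1 + k4 e2 - k3 e3, v·e2 = k1 e2 + k2 e3, v·e3 = k2 e2 + k1 e3; gv·1 = l1 + l2 e1 + l3 e2 + l4 e3, gv·e1 = l2 + l1 e1 + l4 e2 + l3 e3, gv·e2 = l1 e2 - l2 e3, gv·e3 = -l2 e2 + l1 e3. Then for all a, b in H_ss and all h in H4, h·(ab) = (h1·a)(h2·b), where Δ(h) = h1 ⊗ h2 is the comultiplication of H4. -/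
open Quaternion TensorProduct

noncomputable section

/-- Sweedler's Hopf algebra `H₄` as a vector space over `ℝ`,
with basis `1, g, ν, gν` indexed by `Fin 4`. -/
abbrev H4 := Fin 4 → ℝ

namespace H4

/-- The canonical basis `1, g, ν, gν` of Sweedler's Hopf algebra. -/
def B : Module.Basis (Fin 4) ℝ H4 := Pi.basisFun ℝ (Fin 4)

/-- The unit `1` of `H₄`. -/
def u : H4 := B 0
/-- The grouplike element `g` of `H₄`. -/
def g : H4 := B 1
/-- The element `ν` of `H₄`. -/
def v : H4 := B 2
/-- The element `gν` of `H₄`. -/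
def w : H4 := B 3

/-- The multiplication of Sweedler's Hopf algebra, as a bilinear map:
`g² = 1`, `ν² = 0`, `gν = -νg`. -/
def mul4 : H4 →ₗ[ℝ] H4 →ₗ[ℝ] H4 :=
  B.constr ℝ ![B.constr ℝ ![u, g, v, w],
               B.constr ℝ ![g, u, w, v],
               B.constr ℝ ![v, -w, 0, 0],
               B.constr ℝ ![w, -v, 0, 0]]

/-- The comultiplication of Sweedler's Hopf algebra:
`Δ(1) = 1⊗1`, `Δ(g) = g⊗g`, `Δ(ν) = g⊗ν + ν⊗1`, `Δ(gν) = 1⊗gν + gν⊗g`. -/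
def Δ : H4 →ₗ[ℝ] H4 ⊗[ℝ] H4 :=
  B.constr ℝ ![u ⊗ₜ u, g ⊗ₜ g, g ⊗ₜ v + v ⊗ₜ u, u ⊗ₜ w + w ⊗ₜ g]

end H4

/-- The split semi-quaternion algebra `H_ss`:
`e1² = 1`, `e2² = 0`, `e3² = 0`, `e1e2 = e3 = -e2e1`,
`e2e3 = 0 = -e3e2`, `e3e1 = -e2 = -e1e3`. -/
abbrev Hss := ℍ[ℝ, 1, 0]

namespace Hss
def e1 : Hss := ⟨0, 1, 0, 0⟩
def e2 : Hss := ⟨0, 0, 1, 0⟩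
def e3 : Hss := ⟨0, 0, 0, 1⟩
/-- The basis `1, e1, e2, e3` of the split semi-quaternion algebra. -/
def Qb : Module.Basis (Fin 4) ℝ Hss := QuaternionAlgebra.basisOneIJK 1 0 0
end Hss

variable (k1 k2 k3 k4 l1 l2 l3 l4 : ℝ)

/-- The value `ν · 1 = ω(1,ν) = ω(ν,1) = k₁ + k₂e₁ + k₃e₂ - k₄e₃`. -/
def nu1 : Hss := k1 • 1 + k2 • Hss.e1 + k3 • Hss.e2 - k4 • Hss.e3

/-- The value `gν · 1 = ω(1,gν) = ω(gν,1) = l₁ + l₂e₁ + l₃e₂ + l₄e₃`. -/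
def gnu1 : Hss := l1 • 1 + l2 • Hss.e1 + l3 • Hss.e2 + l4 • Hss.e3

/-- The partial action `· : H₄ ⊗ H_ss → H_ss` from the paper:
`1` acts as the identity, `g · x = 0`, and `ν`, `gν` act via the parameters
`k₁,…,k₄,l₁,…,l₄` as in the table. -/
def actSS : H4 →ₗ[ℝ] Hss →ₗ[ℝ] Hss :=
  H4.B.constr ℝ
    ![LinearMap.id, 0,
      Hss.Qb.constr ℝ
        ![nu1 k1 k2 k3 k4,
          k2 • 1 + k1 • Hss.e1 + k4 • Hss.e2 - k3 • Hss.e3,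
          k1 • Hss.e2 + k2 • Hss.e3,
          k2 • Hss.e2 + k1 • Hss.e3],
      Hss.Qb.constr ℝ
        ![gnu1 l1 l2 l3 l4,
          l2 • 1 + l1 • Hss.e1 + l4 • Hss.e2 + l3 • Hss.e3,
          l1 • Hss.e2 - l2 • Hss.e3,
          -l2 • Hss.e2 + l1 • Hss.e3]]

/-- The value `ω(ν,ν) = (k₁²+k₂²) + 2k₁k₂e₁ + 2k₁k₃e₂ - 2k₁k₄e₃`. -/
def omvv : Hss :=
  (k1 ^ 2 + k2 ^ 2) • 1 + (2 * k1 * k2) • Hss.e1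
    + (2 * k1 * k3) • Hss.e2 - (2 * k1 * k4) • Hss.e3

/-- The value `ω(ν,gν) = ω(gν,ν)`. -/
def omvw : Hss :=
  (k1 * l1 + k2 * l2) • 1 + (k2 * l1 + k1 * l2) • Hss.e1
    + (k3 * l1 + k4 * l2 + k1 * l3 + k2 * l4) • Hss.e2
    + (-(k4 * l1) - k3 * l2 + k2 * l3 + k1 * l4) • Hss.e3

/-- The cocycle `ω : H₄ ⊗ H₄ → H_ss` from the paper's table. -/
def omSS : H4 →ₗ[ℝ] H4 →ₗ[ℝ] Hss :=
  H4.B.constr ℝ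
    ![H4.B.constr ℝ ![1, 0, nu1 k1 k2 k3 k4, gnu1 l1 l2 l3 l4],
      0,
      H4.B.constr ℝ ![nu1 k1 k2 k3 k4, 0, omvv k1 k2 k3 k4,
        omvw k1 k2 k3 k4 l1 l2 l3 l4],
      H4.B.constr ℝ ![gnu1 l1 l2 l3 l4, 0,
        omvw k1 k2 k3 k4 l1 l2 l3 l4, 0]]

/-
`ν` acts on `H_ss` as left multiplication by `ν · 1` and `gν` as right multiplication by
`gν · 1`, while `g` acts by `0`. Since `Δ(ν) = g ⊗ ν + ν ⊗ 1` and `Δ(gν) = 1 ⊗ gν + gν ⊗ g`,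
the compatibility for `ν` and `gν` reduces to associativity of `H_ss`; for `1` and `g` it is
immediate, and it extends to all of `H₄` by linearity.
-/

namespace H4

theorem Δ_u : Δ u = u ⊗ₜ u := B.constr_basis ℝ _ 0
theorem Δ_g : Δ g = g ⊗ₜ g := B.constr_basis ℝ _ 1
theorem Δ_v : Δ v = g ⊗ₜ v + v ⊗ₜ u := B.constr_basis ℝ _ 2
theorem Δ_w : Δ w = u ⊗ₜ w + w ⊗ₜ g := B.constr_basis ℝ _ 3

theorem ext_ugvw {M : Type*} [AddCommMonoid M] [Module ℝ M] {f f' : H4 →ₗ[ℝ] M}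
    (hu : f u = f' u) (hg : f g = f' g) (hv : f v = f' v) (hw : f w = f' w) : f = f' :=
  B.ext fun i => by fin_cases i <;> assumption

end H4

theorem actSS_u : actSS k1 k2 k3 k4 l1 l2 l3 l4 H4.u = LinearMap.id :=
  H4.B.constr_basis ℝ _ 0

theorem actSS_g : actSS k1 k2 k3 k4 l1 l2 l3 l4 H4.g = 0 :=
  H4.B.constr_basis ℝ _ 1

theorem actSS_v :
    actSS k1 k2 k3 k4 l1 l2 l3 l4 H4.v = LinearMap.mulLeft ℝ (nu1 k1 k2 k3 k4) := by
  refine (H4.B.constr_basis ℝ _ 2).trans (LinearMap.ext fun x => ?_)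
  ext <;>
    simp [Module.Basis.constr_apply_fintype, Fin.sum_univ_four, Hss.Qb, nu1, Hss.e1, Hss.e2,
      Hss.e3] <;>
    ring

theorem actSS_w :
    actSS k1 k2 k3 k4 l1 l2 l3 l4 H4.w = LinearMap.mulRight ℝ (gnu1 l1 l2 l3 l4) := by
  refine (H4.B.constr_basis ℝ _ 3).trans (LinearMap.ext fun x => ?_)
  ext <;>
    simp [Module.Basis.constr_apply_fintype, Fin.sum_univ_four, Hss.Qb, gnu1, Hss.e1, Hss.e2,
      Hss.e3] <;>
    ring

/-- For the partial action of Sweedler's Hopf algebra `H₄` on the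
split semi-quaternion algebra `H_ss` given by the paper's table, one has
`h·(ab) = (h₁·a)(h₂·b)` for all `a, b ∈ H_ss` and `h ∈ H₄`. -/
theorem actSS_mul_compat (a b : Hss) (h : H4) :
    actSS k1 k2 k3 k4 l1 l2 l3 l4 h (a * b) =
      (LinearMap.mul' ℝ Hss ∘ₗ
        TensorProduct.map ((actSS k1 k2 k3 k4 l1 l2 l3 l4).flip a)
          ((actSS k1 k2 k3 k4 l1 l2 l3 l4).flip b)) (H4.Δ h) := by
  suffices (actSS k1 k2 k3 k4 l1 l2 l3 l4).flip (a * b) =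
      (LinearMap.mul' ℝ Hss ∘ₗ TensorProduct.map ((actSS k1 k2 k3 k4 l1 l2 l3 l4).flip a)
          ((actSS k1 k2 k3 k4 l1 l2 l3 l4).flip b)) ∘ₗ H4.Δ from
    LinearMap.congr_fun this h
  refine H4.ext_ugvw ?_ ?_ ?_ ?_
  · simp [H4.Δ_u, actSS_u]
  · simp [H4.Δ_g, actSS_g]
  · simp [H4.Δ_v, actSS_u, actSS_g, actSS_v, mul_assoc]
  · simp [H4.Δ_w, actSS_u, actSS_g, actSS_w, mul_assoc]
end
end

section
/- With the action · of H4 on H_ss as defined (parameters k1..k4, l1..l4) and the cocycle ω: H4 ⊗ H4 → H_ss given by the table in the paper, the pair (·, ω) satisfies the twisted partial action compatibility condition: for all h, l in H4 and a in H_ss, (h1·(l1·a)) ω(h2, l2) = ω(h1, l1)(h2 l2 · a). -/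
/-!
Over `H_ss`, the action of `ν` is left multiplication by `x = ν·1` and the action of `gν` is
right multiplication by `y = gν·1`, and `ω(ν,ν) = x²`. For such an action on any algebra, with
`ω(ν,gν)` and `ω(gν,ν)` arbitrary, the compatibility condition on pairs of basis elements is
just associativity: e.g. for `(ν, gν)` both sides are `x a y`, and for `(gν, gν)` the two terms
`y (-(x a))` and `y (x a)` coming from `gν g = -ν` and `g gν = ν` cancel.
-/

open Quaternion TensorProduct

noncomputable section

variable (k1 k2 k3 k4 l1 l2 l3 l4 : ℝ)

theorem apply_tmul_eq_of_basis {R ι V M N : Type*} [CommSemiring R] [AddCommMonoid V]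
    [Module R V] [AddCommMonoid M] [Module R M] [AddCommMonoid N] [Module R N]
    (b : Module.Basis ι R V) (Δ : V →ₗ[R] M) {F G : M ⊗[R] M →ₗ[R] N}
    (hFG : ∀ i j, F (Δ (b i) ⊗ₜ Δ (b j)) = G (Δ (b i) ⊗ₜ Δ (b j))) (h l : V) :
    F (Δ h ⊗ₜ Δ l) = G (Δ h ⊗ₜ Δ l) := by
  have : ((TensorProduct.mk R M M).compl₁₂ Δ Δ).compr₂ F =
      ((TensorProduct.mk R M M).compl₁₂ Δ Δ).compr₂ G :=
    LinearMap.ext_basis b b hFG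
  exact LinearMap.congr_fun₂ this h l

section Sweedler

variable {A : Type*} [Ring A] [Algebra ℝ A]

def sweedlerAct (x y : A) : H4 →ₗ[ℝ] A →ₗ[ℝ] A :=
  H4.B.constr ℝ ![LinearMap.id, 0, LinearMap.mulLeft ℝ x, LinearMap.mulRight ℝ y]

def sweedlerCocycle (x y z z' : A) : H4 →ₗ[ℝ] H4 →ₗ[ℝ] A :=
  H4.B.constr ℝ
    ![H4.B.constr ℝ ![1, 0, x, y], 0, H4.B.constr ℝ ![x, 0, x * x, z], H4.B.constr ℝ ![y, 0, z', 0]]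

theorem sweedlerAct_twisted_compat (x y z z' a : A) (h l : H4) :
    (LinearMap.mul' ℝ A ∘ₗ
        TensorProduct.map
          (TensorProduct.lift ((sweedlerAct x y).compl₂ ((sweedlerAct x y).flip a)))
          (TensorProduct.lift (sweedlerCocycle x y z z')) ∘ₗ
        (tensorTensorTensorComm ℝ H4 H4 H4 H4).toLinearMap)
      (H4.Δ h ⊗ₜ[ℝ] H4.Δ l) =
    (LinearMap.mul' ℝ A ∘ₗ
        TensorProduct.map (TensorProduct.lift (sweedlerCocycle x y z z'))
          ((sweedlerAct x y).flip a ∘ₗ TensorProduct.lift H4.mul4) ∘ₗ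
        (tensorTensorTensorComm ℝ H4 H4 H4 H4).toLinearMap)
      (H4.Δ h ⊗ₜ[ℝ] H4.Δ l) := by
  refine apply_tmul_eq_of_basis H4.B H4.Δ (fun i j => ?_) h l
  -- `constr_apply_fintype` would expand `constr` into sums instead of using `constr_basis`
  fin_cases i <;> fin_cases j <;>
    simp [H4.Δ, H4.mul4, H4.u, H4.g, H4.v, H4.w, sweedlerAct, sweedlerCocycle, tmul_add, add_tmul,
      mul_assoc, -Module.Basis.constr_apply_fintype]

end Sweedler

theorem Hss.coe_Qb : ⇑Hss.Qb = ![1, Hss.e1, Hss.e2, Hss.e3] := by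
  funext i
  fin_cases i <;> ext <;> simp [Hss.Qb, QuaternionAlgebra.basisOneIJK, Module.Basis.coe_ofEquivFun,
    Hss.e1, Hss.e2, Hss.e3]

theorem omvv_eq_nu1_mul : omvv k1 k2 k3 k4 = nu1 k1 k2 k3 k4 * nu1 k1 k2 k3 k4 := by
  ext <;> simp [omvv, nu1, Hss.e1, Hss.e2, Hss.e3] <;> ring

theorem actSS_eq_sweedlerAct :
    actSS k1 k2 k3 k4 l1 l2 l3 l4 = sweedlerAct (nu1 k1 k2 k3 k4) (gnu1 l1 l2 l3 l4) := by
  unfold actSS sweedlerAct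
  congr
  · rw [← Hss.Qb.constr_self ℝ (LinearMap.mulLeft ℝ (nu1 k1 k2 k3 k4))]
    congr 1
    funext i
    fin_cases i <;> ext <;> simp [Hss.coe_Qb, nu1, Hss.e1, Hss.e2, Hss.e3]
  · rw [← Hss.Qb.constr_self ℝ (LinearMap.mulRight ℝ (gnu1 l1 l2 l3 l4))]
    congr 1
    funext i
    fin_cases i <;> ext <;> simp [Hss.coe_Qb, gnu1, Hss.e1, Hss.e2, Hss.e3]

theorem omSS_eq_sweedlerCocycle :
    omSS k1 k2 k3 k4 l1 l2 l3 l4 = sweedlerCocycle (nu1 k1 k2 k3 k4) (gnu1 l1 l2 l3 l4)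
      (omvw k1 k2 k3 k4 l1 l2 l3 l4) (omvw k1 k2 k3 k4 l1 l2 l3 l4) := by
  rw [omSS, sweedlerCocycle, omvv_eq_nu1_mul]

/-- The twisted partial action compatibility condition
`(h₁·(l₁·a)) ω(h₂,l₂) = ω(h₁,l₁)(h₂l₂·a)` for all `h, l ∈ H₄`, `a ∈ H_ss`. -/
theorem actSS_omSS_twisted_compat (a : Hss) (h l : H4) :
    (LinearMap.mul' ℝ Hss ∘ₗ
        TensorProduct.map
          (TensorProduct.lift ((actSS k1 k2 k3 k4 l1 l2 l3 l4).compl₂ ((actSS k1 k2 k3 k4 l1 l2 l3 l4).flip a)))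
          (TensorProduct.lift (omSS k1 k2 k3 k4 l1 l2 l3 l4)) ∘ₗ
        (tensorTensorTensorComm ℝ H4 H4 H4 H4).toLinearMap)
      (H4.Δ h ⊗ₜ[ℝ] H4.Δ l) =
    (LinearMap.mul' ℝ Hss ∘ₗ
        TensorProduct.map (TensorProduct.lift (omSS k1 k2 k3 k4 l1 l2 l3 l4))
          ((actSS k1 k2 k3 k4 l1 l2 l3 l4).flip a ∘ₗ TensorProduct.lift H4.mul4) ∘ₗ
        (tensorTensorTensorComm ℝ H4 H4 H4 H4).toLinearMap)
      (H4.Δ h ⊗ₜ[ℝ] H4.Δ l) := by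
  rw [actSS_eq_sweedlerAct, omSS_eq_sweedlerCocycle]
  exact sweedlerAct_twisted_compat _ _ _ _ a h l
end
end

section
/- Let H4 act on the split quaternion algebra H_s by: 1 acts as identity, g·x = 0, v·1 = e3, v·e1 = e2, v·e2 = e1, v·e3 = 1, gv·1 = l1 - l2e1 + l3e2 + l4e3, gv·e1 = l2 + l1e1 - l4e2 + l3e3, gv·e2 = l3 - l4e1 + l1e2 + l2e3, gv·e3 = l4 + l3e1 - l2e2 + l1e3. Then for all a, b in H_s and h in H4, h·(ab) = (h1·a)(h2·b). -/
open Quaternion TensorProduct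

noncomputable section

/-- The split quaternion algebra `H_s`:
`e1² = -1`, `e2² = 1`, `e3² = 1`, `e1e2 = e3 = -e2e1`,
`e2e3 = -e1 = -e3e2`, `e3e1 = e2 = -e1e3`. -/
abbrev Hs := ℍ[ℝ, -1, 1]

namespace Hs
def e1 : Hs := ⟨0, 1, 0, 0⟩
def e2 : Hs := ⟨0, 0, 1, 0⟩
def e3 : Hs := ⟨0, 0, 0, 1⟩
/-- The basis `1, e1, e2, e3` of the split quaternion algebra. -/
def Qb : Module.Basis (Fin 4) ℝ Hs := QuaternionAlgebra.basisOneIJK (-1) 0 1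
end Hs

variable (l1 l2 l3 l4 : ℝ)

/-- The value `gν · 1 = ω(1,gν) = ω(gν,1) = l₁ - l₂e₁ + l₃e₂ + l₄e₃`. -/
def gnu1s : Hs := l1 • 1 - l2 • Hs.e1 + l3 • Hs.e2 + l4 • Hs.e3

/-- The value `ω(ν,gν) = ω(gν,ν) = l₄ + l₃e₁ - l₂e₂ + l₁e₃`. -/
def omvws : Hs := l4 • 1 + l3 • Hs.e1 - l2 • Hs.e2 + l1 • Hs.e3

/-- The partial action `· : H₄ ⊗ H_s → H_s` from the paper:
`1` acts as the identity, `g·x = 0`, `ν·1 = e₃`, `ν·e₁ = e₂`, `ν·e₂ = e₁`,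
`ν·e₃ = 1`, and `gν` acts via the parameters `l₁,…,l₄`. -/
def actS : H4 →ₗ[ℝ] Hs →ₗ[ℝ] Hs :=
  H4.B.constr ℝ
    ![LinearMap.id, 0,
      Hs.Qb.constr ℝ ![Hs.e3, Hs.e2, Hs.e1, 1],
      Hs.Qb.constr ℝ
        ![gnu1s l1 l2 l3 l4,
          l2 • 1 + l1 • Hs.e1 - l4 • Hs.e2 + l3 • Hs.e3,
          l3 • 1 - l4 • Hs.e1 + l1 • Hs.e2 + l2 • Hs.e3,
          omvws l1 l2 l3 l4]]

/-- The cocycle `ω : H₄ ⊗ H₄ → H_s` from the paper's table. -/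
def omS : H4 →ₗ[ℝ] H4 →ₗ[ℝ] Hs :=
  H4.B.constr ℝ
    ![H4.B.constr ℝ ![1, 0, Hs.e3, gnu1s l1 l2 l3 l4],
      0,
      H4.B.constr ℝ ![Hs.e3, 0, 1, omvws l1 l2 l3 l4],
      H4.B.constr ℝ ![gnu1s l1 l2 l3 l4, 0, omvws l1 l2 l3 l4, 0]]

/-! Since `g` acts by zero, only the terms `ν·a ⊗ 1·b` of `Δ(ν)` and `1·a ⊗ gν·b` of `Δ(gν)`
survive. The action of `ν` is left multiplication by `e₃ = ν·1` and that of `gν` is right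
multiplication by `gν·1`, so on each basis element of `H₄` the claim is associativity of `H_s`;
both sides are linear in `h`. -/

lemma H4.coe_B : ⇑H4.B = ![H4.u, H4.g, H4.v, H4.w] := by
  ext i : 1
  fin_cases i <;> rfl

lemma H4.Δ_u_s13 : H4.Δ H4.u = H4.u ⊗ₜ H4.u := by
  rw [H4.u, H4.Δ, Module.Basis.constr_basis]; rfl

lemma H4.Δ_g_s13 : H4.Δ H4.g = H4.g ⊗ₜ H4.g := by
  rw [H4.g, H4.Δ, Module.Basis.constr_basis]; rfl

lemma H4.Δ_v_s13 : H4.Δ H4.v = H4.g ⊗ₜ H4.v + H4.v ⊗ₜ H4.u := by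
  rw [H4.v, H4.Δ, Module.Basis.constr_basis]; rfl

lemma H4.Δ_w_s13 : H4.Δ H4.w = H4.u ⊗ₜ H4.w + H4.w ⊗ₜ H4.g := by
  rw [H4.w, H4.Δ, Module.Basis.constr_basis]; rfl

lemma Hs.coe_Qb : ⇑Hs.Qb = ![1, Hs.e1, Hs.e2, Hs.e3] := by
  ext i : 1
  fin_cases i <;> ext <;> simp [Hs.Qb, QuaternionAlgebra.basisOneIJK, Hs.e1, Hs.e2, Hs.e3]

lemma actS_u : actS l1 l2 l3 l4 H4.u = LinearMap.id := by
  rw [H4.u, actS, Module.Basis.constr_basis]; rfl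

lemma actS_g : actS l1 l2 l3 l4 H4.g = 0 := by
  rw [H4.g, actS, Module.Basis.constr_basis]; rfl

lemma actS_v : actS l1 l2 l3 l4 H4.v = LinearMap.mulLeft ℝ Hs.e3 := by
  rw [H4.v, actS, Module.Basis.constr_basis]
  refine Hs.Qb.ext fun i => ?_
  change Hs.Qb.constr ℝ _ (Hs.Qb i) = _
  rw [Module.Basis.constr_basis]
  fin_cases i <;> ext <;> simp [Hs.coe_Qb, Hs.e1, Hs.e2, Hs.e3]

lemma actS_w : actS l1 l2 l3 l4 H4.w = LinearMap.mulRight ℝ (gnu1s l1 l2 l3 l4) := by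
  rw [H4.w, actS, Module.Basis.constr_basis]
  refine Hs.Qb.ext fun i => ?_
  change Hs.Qb.constr ℝ _ (Hs.Qb i) = _
  rw [Module.Basis.constr_basis]
  fin_cases i <;> ext <;> simp [Hs.coe_Qb, Hs.e1, Hs.e2, Hs.e3, gnu1s, omvws]

/-- For the partial action of `H₄` on the split quaternion algebra
`H_s`, one has `h·(ab) = (h₁·a)(h₂·b)` for all `a, b ∈ H_s` and `h ∈ H₄`. -/
theorem actS_mul_compat (a b : Hs) (h : H4) :
    (actS l1 l2 l3 l4) h (a * b) =
      (LinearMap.mul' ℝ Hs ∘ₗ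
        TensorProduct.map ((actS l1 l2 l3 l4).flip a) ((actS l1 l2 l3 l4).flip b)) (H4.Δ h) := by
  suffices (actS l1 l2 l3 l4).flip (a * b) = LinearMap.mul' ℝ Hs ∘ₗ
      TensorProduct.map ((actS l1 l2 l3 l4).flip a) ((actS l1 l2 l3 l4).flip b) ∘ₗ H4.Δ from
    LinearMap.congr_fun this h
  refine H4.B.ext fun i => ?_
  rw [H4.coe_B]
  fin_cases i <;>
    simp [H4.Δ_u_s13, H4.Δ_g_s13, H4.Δ_v_s13, H4.Δ_w_s13, actS_u, actS_g, actS_v, actS_w, mul_assoc]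
end
end

section
/- Let H4 act on the quarter-quaternion algebra H_00 by: 1 acts as identity, g·x = 0, v·1 = k1e1 + k2e2 + k3e3, v·e1 = -k2e3, v·e2 = k1e3, v·e3 = 0, gv·1 = l1 + l2e1 + l3e2 + l4e3, gv·e1 = l1e1 + l3e3, gv·e2 = l1e2 - l2e3, gv·e3 = l1e3. Then h·(ab) = (h1·a)(h2·b) for all a, b in H_00 and h in H4. -/
/-!
Since `g` acts by zero, the coproduct formulas reduce the compatibility for `ν` and `gν` to
`ν·(ab) = (ν·a) b` and `gν·(ab) = a (gν·b)`: they say exactly that `ν` acts as left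
multiplication by `ν·1` and `gν` as right multiplication by `gν·1`. Both identities are checked
on the basis `1, e1, e2, e3` of `H₀₀`, and compatibility then follows from associativity.
-/

open Quaternion TensorProduct

noncomputable section

/-- The quarter-quaternion algebra `H₀₀`:
`e1² = e2² = e3² = 0`, `e1e2 = e3 = -e2e1`, `e2e3 = e3e2 = 0`, `e3e1 = e1e3 = 0`. -/
abbrev H00 := ℍ[ℝ, 0, 0]

namespace H00
def e1 : H00 := ⟨0, 1, 0, 0⟩
def e2 : H00 := ⟨0, 0, 1, 0⟩
def e3 : H00 := ⟨0, 0, 0, 1⟩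
/-- The basis `1, e1, e2, e3` of the quarter-quaternion algebra. -/
def Qb : Module.Basis (Fin 4) ℝ H00 := QuaternionAlgebra.basisOneIJK 0 0 0
end H00

variable (k1 k2 k3 l1 l2 l3 l4 : ℝ)

/-- The value `ν · 1 = ω(1,ν) = ω(ν,1) = k₁e₁ + k₂e₂ + k₃e₃`. -/
def nu100 : H00 := k1 • H00.e1 + k2 • H00.e2 + k3 • H00.e3

/-- The value `gν · 1 = ω(1,gν) = ω(gν,1) = l₁ + l₂e₁ + l₃e₂ + l₄e₃`. -/
def gnu100 : H00 := l1 • 1 + l2 • H00.e1 + l3 • H00.e2 + l4 • H00.e3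

/-- The value `ω(ν,gν) = ω(gν,ν) = k₁l₁e₁ + k₂l₁e₂ + (k₃l₁ - k₂l₂ + k₁l₃)e₃`. -/
def omvw00 : H00 :=
  (k1 * l1) • H00.e1 + (k2 * l1) • H00.e2 + (k3 * l1 - k2 * l2 + k1 * l3) • H00.e3

/-- The partial action `· : H₄ ⊗ H₀₀ → H₀₀` from the paper:
`1` acts as the identity, `g·x = 0`, `ν·1 = k₁e₁+k₂e₂+k₃e₃`, `ν·e₁ = -k₂e₃`,
`ν·e₂ = k₁e₃`, `ν·e₃ = 0`, and `gν` acts via the parameters `l₁,…,l₄`. -/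
def act00 : H4 →ₗ[ℝ] H00 →ₗ[ℝ] H00 :=
  H4.B.constr ℝ
    ![LinearMap.id, 0,
      H00.Qb.constr ℝ ![nu100 k1 k2 k3, -k2 • H00.e3, k1 • H00.e3, 0],
      H00.Qb.constr ℝ
        ![gnu100 l1 l2 l3 l4,
          l1 • H00.e1 + l3 • H00.e3,
          l1 • H00.e2 - l2 • H00.e3,
          l1 • H00.e3]]

/-- The cocycle `ω : H₄ ⊗ H₄ → H₀₀` from the paper's table. -/
def om00 : H4 →ₗ[ℝ] H4 →ₗ[ℝ] H00 :=
  H4.B.constr ℝ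
    ![H4.B.constr ℝ ![1, 0, nu100 k1 k2 k3, gnu100 l1 l2 l3 l4],
      0,
      H4.B.constr ℝ ![nu100 k1 k2 k3, 0, 0, omvw00 k1 k2 k3 l1 l2 l3],
      H4.B.constr ℝ ![gnu100 l1 l2 l3 l4, 0, omvw00 k1 k2 k3 l1 l2 l3, 0]]

theorem H4.mul_compat_of_mulLeft_mulRight {A : Type*} [Semiring A] [Algebra ℝ A]
    (φ : H4 →ₗ[ℝ] A →ₗ[ℝ] A) (x y : A)
    (hu : φ H4.u = LinearMap.id) (hg : φ H4.g = 0)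
    (hv : φ H4.v = LinearMap.mulLeft ℝ x) (hw : φ H4.w = LinearMap.mulRight ℝ y)
    (a b : A) (h : H4) :
    φ h (a * b) = (LinearMap.mul' ℝ A ∘ₗ TensorProduct.map (φ.flip a) (φ.flip b)) (H4.Δ h) := by
  suffices φ.flip (a * b) =
      LinearMap.mul' ℝ A ∘ₗ TensorProduct.map (φ.flip a) (φ.flip b) ∘ₗ H4.Δ from
    LinearMap.congr_fun this h
  simp only [H4.u, H4.g, H4.v, H4.w] at hu hg hv hw
  refine H4.B.ext fun i => ?_
  fin_cases i <;> simp [H4.Δ, H4.u, H4.g, H4.v, H4.w, hu, hg, hv, hw, mul_assoc]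

theorem H00.coe_Qb : ⇑H00.Qb = ![1, H00.e1, H00.e2, H00.e3] := by
  ext i : 1
  fin_cases i <;> ext <;> simp [H00.Qb, QuaternionAlgebra.basisOneIJK, H00.e1, H00.e2, H00.e3]

theorem act00_u : act00 k1 k2 k3 l1 l2 l3 l4 H4.u = LinearMap.id := by
  simp [act00, H4.u]

theorem act00_g : act00 k1 k2 k3 l1 l2 l3 l4 H4.g = 0 := by
  simp [act00, H4.g]

theorem act00_v : act00 k1 k2 k3 l1 l2 l3 l4 H4.v = LinearMap.mulLeft ℝ (nu100 k1 k2 k3) := by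
  refine H00.Qb.ext fun i => ?_
  simp only [act00, H4.v, Module.Basis.constr_basis, Matrix.cons_val_two, Matrix.tail_cons,
    Matrix.head_cons]
  fin_cases i <;> ext <;> simp [H00.coe_Qb, nu100, H00.e1, H00.e2, H00.e3]

theorem act00_w : act00 k1 k2 k3 l1 l2 l3 l4 H4.w = LinearMap.mulRight ℝ (gnu100 l1 l2 l3 l4) := by
  refine H00.Qb.ext fun i => ?_
  simp only [act00, H4.w, Module.Basis.constr_basis, Matrix.cons_val_three, Matrix.tail_cons,
    Matrix.head_cons]
  fin_cases i <;> ext <;> simp [H00.coe_Qb, gnu100, H00.e1, H00.e2, H00.e3]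

/-- For the partial action of `H₄` on the quarter-quaternion
algebra `H₀₀`, one has `h·(ab) = (h₁·a)(h₂·b)` for all `a, b ∈ H₀₀`, `h ∈ H₄`. -/
theorem act00_mul_compat (a b : H00) (h : H4) :
    (act00 k1 k2 k3 l1 l2 l3 l4) h (a * b) =
      (LinearMap.mul' ℝ H00 ∘ₗ
        TensorProduct.map ((act00 k1 k2 k3 l1 l2 l3 l4).flip a) ((act00 k1 k2 k3 l1 l2 l3 l4).flip b)) (H4.Δ h) :=
  H4.mul_compat_of_mulLeft_mulRight _ _ _ (act00_u ..) (act00_g ..) (act00_v ..) (act00_w ..) a b h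
end
end
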